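/- arXiv:2503.21547 — 2 statements merged into one kernel-verified Lean document; each statement's English description precedes it below -/
import Mathlib

section
/- Let I be a nil ideal of a ring R. Then R is GSWNC if and only if R/I is GSWNC. -/
/-- An element is strongly weakly nil-clean. -/
def IsSWNC {R : Type*} [Ring R] (a : R) : Prop :=
  ∃ q e : R, IsNilpotent q ∧ IsIdempotentElem e ∧ Commute q e ∧ (a = q + e ∨ a = q - e)

/-- A ring is GSWNC if every non-unit is strongly weakly nil-clean. -/
def IsGSWNC (R : Type*) [Ring R] : Prop :=
  ∀ a : R, ¬ IsUnit a → IsSWNC a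

/-! An element `a` is strongly weakly nil-clean iff `a - a ^ 2` or `a + a ^ 2` is nilpotent. For
`a = q + e` the first is `q * (1 - q - 2 e)`; conversely, if `a - a ^ 2` is nilpotent then `a` is
idempotent in `A ⧸ nilradical A`, where `A` is the commutative subring generated by `a`, and an
idempotent lift `e` of it leaves `a - e` nilpotent. A surjection with nil kernel reflects both
nilpotency and invertibility, so GSWNC passes along it in both directions. -/

def IsStronglyNilClean {R : Type*} [Ring R] (a : R) : Prop :=
  ∃ q e : R, IsNilpotent q ∧ IsIdempotentElem e ∧ Commute q e ∧ a = q + e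

lemma exists_isIdempotentElem_isNilpotent_sub_of_isNilpotent_sub_sq {A : Type*} [CommRing A]
    {a : A} (h : IsNilpotent (a - a ^ 2)) :
    ∃ e : A, IsIdempotentElem e ∧ IsNilpotent (a - e) := by
  let f := Ideal.Quotient.mk (nilradical A)
  have hfa : IsIdempotentElem (f a) := by
    rw [IsIdempotentElem, eq_comm, ← sub_eq_zero, ← map_mul, ← map_sub,
      Ideal.Quotient.eq_zero_iff_mem, mem_nilradical, ← sq]
    exact h
  obtain ⟨e, he, hfe⟩ := exists_isIdempotentElem_eq_of_ker_isNilpotent f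
    (fun x hx ↦ by rwa [Ideal.mk_ker, mem_nilradical] at hx) (f a) ⟨a, rfl⟩ hfa
  exact ⟨e, he, by rw [← mem_nilradical, ← Ideal.Quotient.eq, hfe]⟩

section Ring

variable {R : Type*} [Ring R] {a : R}

lemma isSWNC_iff_isStronglyNilClean_or_neg :
    IsSWNC a ↔ IsStronglyNilClean a ∨ IsStronglyNilClean (-a) := by
  constructor
  · rintro ⟨q, e, hq, he, hqe, rfl | rfl⟩
    · exact .inl ⟨q, e, hq, he, hqe, rfl⟩
    · exact .inr ⟨-q, e, hq.neg, he, hqe.neg_left, by abel⟩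
  · rintro (⟨q, e, hq, he, hqe, rfl⟩ | ⟨q, e, hq, he, hqe, ha⟩)
    · exact ⟨q, e, hq, he, hqe, .inl rfl⟩
    · exact ⟨-q, e, hq.neg, he, hqe.neg_left, .inr (by rw [← neg_neg a, ha]; abel)⟩

lemma IsStronglyNilClean.isNilpotent_sub_sq (h : IsStronglyNilClean a) :
    IsNilpotent (a - a ^ 2) := by
  obtain ⟨q, e, hq, he, hqe, rfl⟩ := h
  have hfactor : q + e - (q + e) ^ 2 = q * (1 - q - (e + e)) := by
    rw [sq, add_mul, mul_add, mul_add, he.eq, ← hqe.eq]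
    noncomm_ring
  rw [hfactor]
  exact (((Commute.one_right q).sub_right (.refl q)).sub_right
    (hqe.add_right hqe)).isNilpotent_mul_right hq

open scoped IsMulCommutative in
lemma isStronglyNilClean_of_isNilpotent_sub_sq (h : IsNilpotent (a - a ^ 2)) :
    IsStronglyNilClean a := by
  let A := Subring.closure ({a} : Set R)
  have : IsMulCommutative A := Subring.isMulCommutative_closure (by simp)
  let a' : A := ⟨a, Subring.subset_closure rfl⟩
  obtain ⟨e, he, hae⟩ := exists_isIdempotentElem_isNilpotent_sub_of_isNilpotent_sub_sq
    (a := a') ((IsNilpotent.map_iff (f := A.subtype) Subtype.val_injective).1 h)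
  exact ⟨a - e, e, hae.map A.subtype, he.map A.subtype, (Commute.all (a' - e) e).map A.subtype,
    (sub_add_cancel a e).symm⟩

lemma isStronglyNilClean_iff_isNilpotent_sub_sq :
    IsStronglyNilClean a ↔ IsNilpotent (a - a ^ 2) :=
  ⟨IsStronglyNilClean.isNilpotent_sub_sq, isStronglyNilClean_of_isNilpotent_sub_sq⟩

lemma isSWNC_iff_isNilpotent :
    IsSWNC a ↔ IsNilpotent (a - a ^ 2) ∨ IsNilpotent (a + a ^ 2) := by
  rw [isSWNC_iff_isStronglyNilClean_or_neg, isStronglyNilClean_iff_isNilpotent_sub_sq,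
    isStronglyNilClean_iff_isNilpotent_sub_sq, neg_sq, ← neg_add', isNilpotent_neg_iff]

end Ring

section NilKernel

variable {R S : Type*} [Ring R] [Ring S] {f : R →+* S}

lemma isNilpotent_map_iff_of_ker_isNilpotent (hf : ∀ x ∈ RingHom.ker f, IsNilpotent x) {a : R} :
    IsNilpotent (f a) ↔ IsNilpotent a := by
  refine ⟨fun ⟨n, hn⟩ ↦ (hf (a ^ n) ?_).of_pow, (·.map f)⟩
  rwa [RingHom.mem_ker, map_pow]

lemma isSWNC_map_iff_of_ker_isNilpotent (hf : ∀ x ∈ RingHom.ker f, IsNilpotent x) {a : R} :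
    IsSWNC (f a) ↔ IsSWNC a := by
  simp only [isSWNC_iff_isNilpotent, ← map_pow, ← map_sub, ← map_add,
    isNilpotent_map_iff_of_ker_isNilpotent hf]

lemma isUnit_map_iff_of_ker_isNilpotent (hf : ∀ x ∈ RingHom.ker f, IsNilpotent x)
    (hsurj : Function.Surjective f) {a : R} : IsUnit (f a) ↔ IsUnit a := by
  refine ⟨fun ha ↦ ?_, (·.map f)⟩
  have isUnit_of_map_eq_one (x : R) (hx : f x = 1) : IsUnit x := by
    simpa using (hf (x - 1) (by simp [RingHom.mem_ker, hx])).isUnit_one_add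
  obtain ⟨b, hb⟩ := hsurj ↑ha.unit⁻¹
  obtain ⟨c, hc⟩ :=
    (isUnit_of_map_eq_one (a * b) (by rw [map_mul, hb, ha.mul_val_inv])).exists_right_inv
  obtain ⟨d, hd⟩ :=
    (isUnit_of_map_eq_one (b * a) (by rw [map_mul, hb, ha.val_inv_mul])).exists_left_inv
  exact isUnit_iff_exists_and_exists.2
    ⟨⟨b * c, by rwa [← mul_assoc]⟩, ⟨d * b, by rwa [mul_assoc]⟩⟩

theorem isGSWNC_iff_of_surjective_of_ker_isNilpotent (hf : ∀ x ∈ RingHom.ker f, IsNilpotent x)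
    (hsurj : Function.Surjective f) : IsGSWNC R ↔ IsGSWNC S := by
  simp only [IsGSWNC, hsurj.forall, isUnit_map_iff_of_ker_isNilpotent hf hsurj,
    isSWNC_map_iff_of_ker_isNilpotent hf]

end NilKernel

theorem stmt5 {R : Type*} [Ring R] (I : TwoSidedIdeal R) (hI : ∀ x ∈ I, IsNilpotent x) :
    IsGSWNC R ↔ IsGSWNC I.ringCon.Quotient := by
  refine isGSWNC_iff_of_surjective_of_ker_isNilpotent (f := I.ringCon.mk') (fun x hx ↦ hI x ?_)
    I.ringCon.mk'_surjective
  rwa [← TwoSidedIdeal.ker_ringCon_mk' I, TwoSidedIdeal.mem_ker]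
end

section
/- For any nonzero ring R and any integer n ≥ 3, the matrix ring Mₙ(R) is not GSWNC. -/
/-!
If `a = q ± e` with `q` nilpotent, `e` idempotent and `qe = eq`, then
`a² ∓ a = q (q ± 2e ∓ 1)` is nilpotent. In `M₂(R)` the companion matrix `B` of `x² + x - 1` satisfies `B² + B = 1`, and then
`B² - B = 1 - 2B` is a unit as well, with inverse `-(3 + 2B)`. Since `n ≥ 3`, placing `B` in a
`2 × 2` corner of `Mₙ(R)` with zeros elsewhere gives a non-unit `A` for which both `A² + A` and
`A² - A` are unit multiples of the nonzero corner idempotent, so neither is nilpotent.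
-/

section Ring

variable {S T : Type*} [Ring S] [Ring T]

theorem IsSWNC.map {a : S} (h : IsSWNC a) (f : S →+* T) : IsSWNC (f a) := by
  obtain ⟨q, e, hq, he, hqe, ha⟩ := h
  refine ⟨f q, f e, hq.map f, he.map f, hqe.map f, ?_⟩
  rcases ha with rfl | rfl
  · exact Or.inl (map_add f q e)
  · exact Or.inr (map_sub f q e)

theorem IsGSWNC.of_ringEquiv (h : IsGSWNC S) (f : S ≃+* T) : IsGSWNC T := fun a ha => by
  simpa using (h (f.symm a) (by rwa [isUnit_map_iff])).map (f : S →+* T)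

theorem Commute.mul_self_sub_eq_of_isIdempotentElem {a e : S} (hae : Commute a e)
    (he : IsIdempotentElem e) : a * a - a = (a - e) * (a + e - 1) := by
  simp only [mul_sub, sub_mul, mul_add, mul_one, hae.eq, he.eq]
  abel

theorem Commute.mul_self_add_eq_of_isIdempotentElem {a e : S} (hae : Commute a e)
    (he : IsIdempotentElem e) : a * a + a = (a + e) * (a - e + 1) := by
  simp only [mul_sub, mul_add, add_mul, mul_one, hae.eq, he.eq]
  abel

theorem IsSWNC.isNilpotent_mul_self_sub_or_add {a : S} (h : IsSWNC a) :
    IsNilpotent (a * a - a) ∨ IsNilpotent (a * a + a) := by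
  obtain ⟨q, e, hq, he, hqe, rfl | rfl⟩ := h
  · left
    rw [(hqe.add_left (Commute.refl e)).mul_self_sub_eq_of_isIdempotentElem he,
      add_sub_cancel_right]
    exact ((((Commute.refl q).add_right hqe).add_right hqe).sub_right
      (Commute.one_right q)).isNilpotent_mul_right hq
  · right
    rw [(hqe.sub_left (Commute.refl e)).mul_self_add_eq_of_isIdempotentElem he,
      sub_add_cancel]
    exact ((((Commute.refl q).sub_right hqe).sub_right hqe).add_right
      (Commute.one_right q)).isNilpotent_mul_right hq

theorem not_isSWNC_of_mul_self_add_eq {a e : S} (hsq : a * a + a = e) (hae : a * e = a)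
    (he0 : e ≠ 0) : ¬ IsSWNC a := by
  have hea : e * a = a := calc
    e * a = a * (a * a + a) := by rw [← hsq]; noncomm_ring
    _ = a := by rw [hsq, hae]
  have he : IsIdempotentElem e := calc
    e * e = a * (a * e) + a * e := by rw [← hsq]; noncomm_ring
    _ = e := by rw [hae, hsq]
  have hsub : a * a - a = e - 2 * a := by
    rw [← hsq]; noncomm_ring
  have hinv₁ : (e - 2 * a) * -(3 * e + 2 * a) = e := calc
    _ = e - 3 * (e * e - e) - 2 * (e * a - a) + 6 * (a * e - a) + 4 * (a * a + a - e) := by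
      noncomm_ring
    _ = e := by rw [he.eq, hae, hea, hsq]; simp
  have hinv₂ : -(3 * e + 2 * a) * (e - 2 * a) = e := calc
    _ = e - 3 * (e * e - e) + 6 * (e * a - a) - 2 * (a * e - a) + 4 * (a * a + a - e) := by
      noncomm_ring
    _ = e := by rw [he.eq, hae, hea, hsq]; simp
  intro h
  rcases h.isNilpotent_mul_self_sub_or_add with h | h
  · rw [hsub] at h
    exact he0 (he.eq_zero_of_isNilpotent
      (hinv₁ ▸ Commute.isNilpotent_mul_right (hinv₁.trans hinv₂.symm) h))
  · exact he0 (he.eq_zero_of_isNilpotent (hsq ▸ h))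

end Ring

namespace Matrix

variable {R m ι : Type*} [Ring R] [Fintype m] [Fintype ι]

theorem fromBlocks_zero_mul_fromBlocks_zero (A B : Matrix m m R) :
    (fromBlocks A 0 0 0 : Matrix (m ⊕ ι) (m ⊕ ι) R) * fromBlocks B 0 0 0 =
      fromBlocks (A * B) 0 0 0 := by
  simp [fromBlocks_multiply]

theorem not_isUnit_fromBlocks_zero [DecidableEq m] [DecidableEq ι] [Nontrivial R] [Nonempty ι]
    (A : Matrix m m R) :
    ¬ IsUnit (fromBlocks A 0 0 0 : Matrix (m ⊕ ι) (m ⊕ ι) R) := by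
  rintro ⟨u, hu⟩
  obtain ⟨i⟩ := ‹Nonempty ι›
  have h := congr_fun₂ u.inv_mul (Sum.inr i) (Sum.inr i)
  rw [hu] at h
  simp [mul_apply] at h

theorem not_isSWNC_fromBlocks_zero [DecidableEq m] [DecidableEq ι] [Nontrivial R]
    [Nonempty m] [Nonempty ι] {B : Matrix m m R} (hB : B * B + B = 1) :
    ¬ IsSWNC (fromBlocks B 0 0 0 : Matrix (m ⊕ ι) (m ⊕ ι) R) := by
  refine not_isSWNC_of_mul_self_add_eq (e := fromBlocks 1 0 0 0) ?_ ?_ ?_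
  · rw [fromBlocks_zero_mul_fromBlocks_zero, fromBlocks_add, hB]
    simp only [add_zero]
  · rw [fromBlocks_zero_mul_fromBlocks_zero, mul_one]
  · intro h
    exact one_ne_zero (congr_arg toBlocks₁₁ h)

theorem not_isGSWNC_fin_two_sum [DecidableEq ι] [Nontrivial R] [Nonempty ι] :
    ¬ IsGSWNC (Matrix (Fin 2 ⊕ ι) (Fin 2 ⊕ ι) R) := by
  have hB : (!![0, 1; 1, -1] : Matrix (Fin 2) (Fin 2) R) * !![0, 1; 1, -1] + !![0, 1; 1, -1] =
      1 := by
    rw [mul_fin_two, one_fin_two]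
    ext i j
    fin_cases i <;> fin_cases j <;> simp
  exact fun h => not_isSWNC_fromBlocks_zero hB (h _ (not_isUnit_fromBlocks_zero _))

end Matrix

theorem stmt8 {R : Type*} [Ring R] [Nontrivial R] (n : ℕ) (hn : 3 ≤ n) :
    ¬ IsGSWNC (Matrix (Fin n) (Fin n) R) := by
  obtain ⟨k, rfl⟩ : ∃ k, n = 2 + (k + 1) := ⟨n - 3, by omega⟩
  exact fun h => Matrix.not_isGSWNC_fin_two_sum (ι := Fin (k + 1))
    (h.of_ringEquiv (Matrix.reindexRingEquiv R finSumFinEquiv.symm))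
end
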